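/- arXiv:2203.03900 — 3 statements merged into one kernel-verified Lean document; each statement's English description precedes it below -/
import Mathlib

section
/- For any integer ξ ≥ 1, the operators on ℚ(q)[X] defined by 𝔡 = D ∘ (Σ_{k=0}^{ξ-1} M^{ξ-1-2k}), 𝔵 = multiplication by X, and 𝔪^{±1} = M^{±ξ} satisfy the relation 𝔡∘𝔵 = (q^ξ 𝔪 - q^{-ξ} 𝔪⁻¹)/(q - q⁻¹). -/
noncomputable section

/-- The field ℚ(q) of rational functions over ℚ. -/
abbrev K : Type := RatFunc ℚ

/-- The indeterminate q. -/
def q : K := RatFunc.X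

/-- The scaling operator `M_c : f(X) ↦ f(cX)` on ℚ(q)[X]. -/
def Mq (c : K) (f : Polynomial K) : Polynomial K :=
  f.comp (Polynomial.C c * Polynomial.X)

/-- The quantum integer [m]. -/
def qint (m : ℤ) : K := (q ^ m - q ^ (-m)) / (q - q⁻¹)

lemma q_ne_zero : q ≠ 0 := RatFunc.X_ne_zero

lemma q_sub_inv_ne_zero : q - q⁻¹ ≠ 0 := by
  intro h
  have h1 : q = q⁻¹ := by linear_combination h
  have h2 : q * q = 1 := by
    nth_rewrite 2 [h1]; exact mul_inv_cancel₀ q_ne_zero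
  have h3 : (Polynomial.X * Polynomial.X : Polynomial ℚ) = 1 := by
    apply RatFunc.algebraMap_injective ℚ
    simpa [q, RatFunc.algebraMap_X] using h2
  have := congrArg Polynomial.natDegree h3
  simp at this

lemma Mq_Mq (a b : K) (f : Polynomial K) : Mq a (Mq b f) = Mq (a * b) f := by
  simp only [Mq, Polynomial.comp_assoc, Polynomial.mul_comp, Polynomial.C_comp,
    Polynomial.X_comp]
  congr 1
  rw [Polynomial.C_mul]
  ring

lemma Mq_sum {α : Type*} (s : Finset α) (c : K) (f : α → Polynomial K) :
    Mq c (∑ i ∈ s, f i) = ∑ i ∈ s, Mq c (f i) := by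
  simp [Mq, Polynomial.comp, Polynomial.eval₂_finset_sum]

lemma Mq_X_mul (c : K) (f : Polynomial K) :
    Mq c (Polynomial.X * f) = c • (Polynomial.X * Mq c f) := by
  simp only [Mq, Polynomial.mul_comp, Polynomial.X_comp, Polynomial.smul_eq_C_mul]
  ring

/-- with 𝔡 = D ∘ (Σ_{k=0}^{ξ-1} M^{ξ-1-2k}), 𝔵 = mult. by X, 𝔪^{±1} = M^{±ξ},
one has 𝔡∘𝔵 = (q^ξ 𝔪 - q^{-ξ} 𝔪⁻¹)/(q - q⁻¹). -/
theorem stmt4 (ξ : ℕ) (hξ : 1 ≤ ξ) (D : Polynomial K → Polynomial K)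
    (hD : ∀ f : Polynomial K,
      (q - q⁻¹) • (Polynomial.X * D f) = Mq q f - Mq q⁻¹ f) :
    ∀ f : Polynomial K,
      D (∑ k ∈ Finset.range ξ, Mq (q ^ ((ξ : ℤ) - 1 - 2 * (k : ℤ))) (Polynomial.X * f))
        = (q - q⁻¹)⁻¹ •
            (q ^ (ξ : ℤ) • Mq (q ^ (ξ : ℤ)) f - q ^ (-(ξ : ℤ)) • Mq (q ^ (-(ξ : ℤ))) f) := by
  intro f
  set S := ∑ k ∈ Finset.range ξ, Mq (q ^ ((ξ : ℤ) - 1 - 2 * (k : ℤ))) (Polynomial.X * f) with hS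
  have key : Mq q S - Mq q⁻¹ S
      = Mq (q ^ (ξ : ℤ)) (Polynomial.X * f) - Mq (q ^ (-(ξ : ℤ))) (Polynomial.X * f) := by
    have h1 : Mq q S = ∑ k ∈ Finset.range ξ,
        Mq (q ^ ((ξ : ℤ) - 2 * (k : ℤ))) (Polynomial.X * f) := by
      rw [hS, Mq_sum]
      refine Finset.sum_congr rfl fun k _ => ?_
      rw [Mq_Mq]
      congr 1
      rw [← zpow_one_add₀ q_ne_zero]
      congr 1
      ring
    have h2 : Mq q⁻¹ S = ∑ k ∈ Finset.range ξ,
        Mq (q ^ ((ξ : ℤ) - 2 * ((k : ℤ) + 1))) (Polynomial.X * f) := by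
      rw [hS, Mq_sum]
      refine Finset.sum_congr rfl fun k _ => ?_
      rw [Mq_Mq]
      congr 1
      rw [show (q⁻¹ : K) = q ^ (-1 : ℤ) from (zpow_neg_one q).symm, ← zpow_add₀ q_ne_zero]
      congr 1
      ring
    rw [h1, h2, ← Finset.sum_sub_distrib]
    have := Finset.sum_range_sub'
      (f := fun k : ℕ => Mq (q ^ ((ξ : ℤ) - 2 * (k : ℤ))) (Polynomial.X * f)) (n := ξ)
    simp only [Nat.cast_add, Nat.cast_one] at this ⊢
    rw [this]
    congr 2 <;> push_cast <;> ring
  have hD' := hD S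
  rw [key, Mq_X_mul, Mq_X_mul] at hD'
  have hX : Polynomial.X * D S
      = Polynomial.X * ((q - q⁻¹)⁻¹ •
          (q ^ (ξ : ℤ) • Mq (q ^ (ξ : ℤ)) f - q ^ (-(ξ : ℤ)) • Mq (q ^ (-(ξ : ℤ))) f)) := by
    have h := congrArg (fun p => (q - q⁻¹)⁻¹ • p) hD'
    simp only [smul_smul, inv_mul_cancel₀ q_sub_inv_ne_zero, one_smul] at h
    rw [h]
    simp only [mul_smul_comm, mul_sub]
  exact mul_left_cancel₀ Polynomial.X_ne_zero hX
end
end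

section
/- Define operators on ℚ(q)[X₀,X₁] acting on monomials X₀^aX₁^b by e(X₀^aX₁^b) = [b] X₀^{a+1}X₁^{b-1}, t(X₀^aX₁^b) = −[b] X₀^aX₁^b. Then e²t + t e² = (q + q⁻¹) e t e as operators. -/
noncomputable section

/-- The monomial X₀^a X₁^b in ℚ(q)[X₀,X₁]. -/
def mono (a b : ℕ) : MvPolynomial (Fin 2) K :=
  MvPolynomial.monomial (Finsupp.single 0 a + Finsupp.single 1 b) (1 : K)

/-!
On `X₀^a X₁^b` with `b ≥ 2`, each of `e²t`, `te²`, `ete` gives a multiple of `X₀^(a+2) X₁^(b-2)`,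
with coefficients `-[b]·[b][b-1]`, `-[b-2]·[b][b-1]` and `-[b-1]·[b][b-1]`, so the relation
reduces to `[b] + [b-2] = (q + q⁻¹)[b-1]`; for `b < 2` every term vanishes since `[0] = 0`.
-/

theorem zpow_sub_zpow_neg_add_two {F : Type*} [Field F] {x : F} (hx : x ≠ 0) (m : ℤ) :
    (x ^ (m + 2) - x ^ (-(m + 2))) + (x ^ m - x ^ (-m)) =
      (x + x⁻¹) * (x ^ (m + 1) - x ^ (-(m + 1))) := by
  simp only [zpow_neg, zpow_add₀ hx, zpow_one, zpow_two]
  field_simp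
  ring

theorem qint_zero : qint 0 = 0 := by simp [qint]

theorem qint_add_two_add_qint (m : ℤ) : qint (m + 2) + qint m = (q + q⁻¹) * qint (m + 1) := by
  simp only [qint]
  rw [← add_div, zpow_sub_zpow_neg_add_two RatFunc.X_ne_zero, mul_div_assoc]

theorem monomial_one_eq_mono (s : Fin 2 →₀ ℕ) :
    MvPolynomial.monomial s (1 : K) = mono (s 0) (s 1) := by
  refine congrArg (MvPolynomial.monomial · 1) (Finsupp.ext fun i => ?_)
  fin_cases i <;> simp

theorem linearMap_ext_mono {M : Type*} [AddCommMonoid M] [Module K M]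
    {f g : MvPolynomial (Fin 2) K →ₗ[K] M} (h : ∀ a b, f (mono a b) = g (mono a b)) : f = g :=
  MvPolynomial.linearMap_ext fun s =>
    LinearMap.ext_ring <| by simpa [monomial_one_eq_mono] using h (s 0) (s 1)

section Oscillator

variable {e t : Module.End K (MvPolynomial (Fin 2) K)}

theorem e_mono_zero (he : ∀ a b : ℕ, e (mono a b) = qint (b : ℤ) • mono (a + 1) (b - 1))
    (a : ℕ) : e (mono a 0) = 0 := by
  simp [he, qint_zero]

theorem e_mono_succ (he : ∀ a b : ℕ, e (mono a b) = qint (b : ℤ) • mono (a + 1) (b - 1))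
    (a n : ℕ) : e (mono a (n + 1)) = qint (n + 1) • mono (a + 1) n := by
  simp [he]

theorem serre_apply_mono (he : ∀ a b : ℕ, e (mono a b) = qint (b : ℤ) • mono (a + 1) (b - 1))
    (ht : ∀ a b : ℕ, t (mono a b) = (-qint (b : ℤ)) • mono a b) (a b : ℕ) :
    (e ^ 2 * t + t * e ^ 2) (mono a b) = ((q + q⁻¹) • (e * t * e)) (mono a b) := by
  rcases b with _ | _ | n
  · simp [sq, ht, e_mono_zero he]
  · simp [sq, ht, e_mono_succ he, e_mono_zero he, qint_zero]
  · rw [show n + 1 + 1 = n + 2 from rfl]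
    simp only [sq, LinearMap.add_apply, LinearMap.smul_apply, Module.End.mul_apply, ht,
      e_mono_succ he, map_smul, smul_smul, ← add_smul, Nat.cast_add, Nat.cast_one,
      add_assoc, one_add_one_eq_two]
    congr 1
    linear_combination (-(qint (n + 2)) * qint (n + 1)) * qint_add_two_add_qint n

end Oscillator

/-- the Serre-type relation e²t + te² = (q+q⁻¹)ete in the
oscillator representation of ⁱU(A_{2r+2,1}) with r = 0. -/
theorem stmt14 (e t : Module.End K (MvPolynomial (Fin 2) K))
    (he : ∀ a b : ℕ, e (mono a b) = qint (b : ℤ) • mono (a + 1) (b - 1))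
    (ht : ∀ a b : ℕ, t (mono a b) = (-qint (b : ℤ)) • mono a b) :
    e ^ 2 * t + t * e ^ 2 = (q + q⁻¹) • (e * t * e) :=
  linearMap_ext_mono (serre_apply_mono he ht)
end
end

section
/- For s ≥ 0, the subspace P_s of ℚ(q)[X₀,…,X_{r+1}] spanned by monomials X^a with Σ a_i = s is invariant and irreducible under the operators e_i, f_i (0 ≤ i ≤ r) defined by e_i X^a = [ξ_{i+1} a_{i+1}] X^{a+e_i−e_{i+1}} and f_i X^a = [ξ_i' a_i] X^{a−e_i+e_{i+1}}, where ξ_j, ξ_j' are arbitrary fixed positive integers: every nonzero subspace of P_s stable under all e_i and f_i equals P_s. -/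
/-!
Give the monomial `X^a` the weight `∑ i, i * a i`. Each `e_i` moves one unit of exponent from
`X_{i+1}` to `X_i`, so it lowers the weight by one, and it does not kill a vector having a monomial
divisible by `X_{i+1}`, because distinct monomials go to distinct monomials with coefficients
`[ξ m] ≠ 0` (as `q` is not a root of unity). Applying the `e_i` to a nonzero vector of `V` thus
reaches a nonzero vector of weight zero, a multiple of `X_0^s`. Conversely, every monomial of
degree `s` and positive weight is a nonzero multiple of some `f_i` applied to a monomial of smaller
weight, so by induction on the weight every monomial of degree `s` lies in `V`.
-/

noncomputable section

lemma q_pow_ne_one {n : ℕ} (hn : n ≠ 0) : q ^ n ≠ 1 := by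
  intro h
  have hX : (Polynomial.X : Polynomial ℚ) ^ n = 1 :=
    RatFunc.algebraMap_injective ℚ (by rw [map_pow, map_one, RatFunc.algebraMap_X]; exact h)
  simpa [hn] using congrArg Polynomial.natDegree hX

lemma q_zpow_sub_zpow_neg_ne_zero {n : ℕ} (hn : n ≠ 0) : q ^ (n : ℤ) - q ^ (-(n : ℤ)) ≠ 0 := by
  have hq : q ≠ 0 := RatFunc.X_ne_zero
  rw [sub_ne_zero]
  intro h
  apply q_pow_ne_one (by omega : n + n ≠ 0)
  rw [pow_add, ← zpow_natCast]
  nth_rw 2 [h]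
  rw [← zpow_add₀ hq, add_neg_cancel, zpow_zero]

lemma qint_natCast_eq_zero_iff {n : ℕ} : qint n = 0 ↔ n = 0 := by
  refine ⟨fun h => ?_, fun h => by simp [h, qint]⟩
  by_contra hn
  have hden : q - q⁻¹ ≠ 0 := by simpa using q_zpow_sub_zpow_neg_ne_zero one_ne_zero
  exact div_ne_zero (q_zpow_sub_zpow_neg_ne_zero hn) hden h

open MvPolynomial
open Finsupp (single weight single_le_iff weight_single)

lemma Finsupp.weight_tsub_single_add_single {σ : Type*} (w : σ → ℕ) {a : σ →₀ ℕ} {k : σ}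
    (hk : 0 < a k) (j : σ) :
    weight w (a - single k 1 + single j 1) + w k = weight w a + w j := by
  conv_rhs => rw [← tsub_add_cancel_of_le (single_le_iff.mpr hk : single k 1 ≤ a)]
  simp only [map_add, weight_single, one_smul]
  ring

lemma Finsupp.degree_tsub_single_add_single {σ : Type*} {a : σ →₀ ℕ} {k : σ} (hk : 0 < a k)
    (j : σ) : (a - single k 1 + single j 1).degree = a.degree := by
  simpa [degree_eq_weight_one] using weight_tsub_single_add_single (fun _ => 1) hk j

lemma Finsupp.add_single_tsub_single_of_ne {σ : Type*} {j k : σ} (hjk : j ≠ k) (a : σ →₀ ℕ) :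
    a + single j 1 - single k 1 = a - single k 1 + single j 1 := by
  classical
  ext x
  simp only [Finsupp.coe_add, Finsupp.coe_tsub, Pi.add_apply, Pi.sub_apply, Finsupp.single_apply]
  split_ifs <;> simp_all

lemma Finsupp.weight_val_tsub_single_succ_add_single_castSucc {n : ℕ} {a : Fin (n + 2) →₀ ℕ}
    {i : Fin (n + 1)} (hi : 0 < a i.succ) :
    weight Fin.val (a - single i.succ 1 + single i.castSucc 1) + 1 = weight Fin.val a := by
  have := weight_tsub_single_add_single Fin.val hi i.castSucc
  simp only [Fin.val_succ, Fin.val_castSucc] at this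
  omega

lemma Finsupp.exists_pos_succ_of_weight_val_ne_zero {n : ℕ} {a : Fin (n + 1) →₀ ℕ}
    (h : weight Fin.val a ≠ 0) : ∃ i : Fin n, 0 < a i.succ := by
  by_contra! hz
  simp [weight_eq_sum, Fin.sum_univ_succ, fun i => Nat.le_zero.mp (hz i)] at h

lemma Finsupp.eq_single_zero_of_weight_val_eq_zero {n : ℕ} {a : Fin (n + 1) →₀ ℕ}
    (h : weight Fin.val a = 0) : a = single 0 a.degree := by
  have hzero : ∀ x : Fin (n + 1), x ≠ 0 → a x = 0 := fun x hx => by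
    rw [weight_eq_sum, Finset.sum_eq_zero_iff] at h
    simpa [Fin.val_ne_zero_iff.mpr hx] using h x (Finset.mem_univ x)
  have ha : a = single 0 (a 0) := by
    ext x
    by_cases hx : x = 0
    · simp [hx]
    · simp [hzero x hx, Ne.symm hx]
  conv_rhs => rw [ha, degree_single]
  exact ha

-- `a - single k 1` truncates when `a k = 0`; the second field makes those terms vanish.
structure IsExponentShift {R σ : Type*} [CommSemiring R]
    (T : Module.End R (MvPolynomial σ R)) (k j : σ) (c : (σ →₀ ℕ) → R) : Prop where
  apply_monomial : ∀ a, T (monomial a 1) = c a • monomial (a - single k 1 + single j 1) 1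
  coeff_eq_zero_iff : ∀ a, c a = 0 ↔ a k = 0

namespace IsExponentShift

variable {R σ : Type*} [CommSemiring R] {T : Module.End R (MvPolynomial σ R)} {k j : σ}
  {c : (σ →₀ ℕ) → R}

lemma apply_monomial_add_single (hT : IsExponentShift T k j c) (b : σ →₀ ℕ) :
    T (monomial (b + single k 1) 1) = c (b + single k 1) • monomial (b + single j 1) 1 := by
  rw [hT.apply_monomial, add_tsub_cancel_right]

lemma coeff_add_single (hT : IsExponentShift T k j c) (b : σ →₀ ℕ) (v : MvPolynomial σ R) :
    coeff (b + single j 1) (T v) = c (b + single k 1) * coeff (b + single k 1) v := by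
  classical
  induction v using MvPolynomial.induction_on' with
  | monomial a r =>
    rw [← mul_one r, ← smul_eq_mul, ← smul_monomial, map_smul, hT.apply_monomial, coeff_smul,
      coeff_smul, coeff_smul, coeff_monomial, coeff_monomial]
    by_cases ha : a k = 0
    · have hne : b + single k 1 ≠ a := fun h => by simp [← h] at ha
      simp [(hT.coeff_eq_zero_iff a).mpr ha, hne.symm]
    · have hle : single k 1 ≤ a := single_le_iff.mpr (Nat.pos_of_ne_zero ha)
      have hiff : a - single k 1 + single j 1 = b + single j 1 ↔ b + single k 1 = a := by
        rw [add_left_inj, tsub_eq_iff_eq_add_of_le hle, eq_comm]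
      by_cases hb : b + single k 1 = a
      · subst hb; simp [mul_comm]
      · simp [hiff.not.mpr hb, Ne.symm hb]
  | add p p' hp hp' => simp only [map_add, coeff_add, hp, hp', mul_add]

lemma ne_zero [NoZeroDivisors R] (hT : IsExponentShift T k j c) {v : MvPolynomial σ R}
    {a : σ →₀ ℕ} (ha : a ∈ v.support) (hk : 0 < a k) : T v ≠ 0 := by
  intro h
  have hcoeff := hT.coeff_add_single (a - single k 1) v
  rw [tsub_add_cancel_of_le (single_le_iff.mpr hk), h, coeff_zero] at hcoeff
  exact mul_ne_zero (mt (hT.coeff_eq_zero_iff a).mp hk.ne') (mem_support_iff.mp ha) hcoeff.symm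

lemma exists_of_mem_support (hT : IsExponentShift T k j c) {v : MvPolynomial σ R}
    {b : σ →₀ ℕ} (hb : b ∈ (T v).support) :
    ∃ a ∈ v.support, 0 < a k ∧ b = a - single k 1 + single j 1 := by
  classical
  conv at hb => rw [v.as_sum, map_sum]
  obtain ⟨a, ha, hba⟩ := Finset.mem_biUnion.mp (support_sum hb)
  rw [← mul_one (coeff a v), ← smul_eq_mul, ← smul_monomial, map_smul, hT.apply_monomial,
    smul_smul] at hba
  by_cases hk : a k = 0
  · simp [(hT.coeff_eq_zero_iff a).mpr hk] at hba
  · refine ⟨a, ha, Nat.pos_of_ne_zero hk, ?_⟩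
    exact Finset.mem_singleton.mp (support_monomial_subset (support_smul hba))

lemma mem_homogeneousSubmodule (hT : IsExponentShift T k j c) {s : ℕ} {v : MvPolynomial σ R}
    (hv : v ∈ homogeneousSubmodule σ R s) : T v ∈ homogeneousSubmodule σ R s := by
  intro b hb
  obtain ⟨a, ha, hk, rfl⟩ := hT.exists_of_mem_support (mem_support_iff.mpr hb)
  have hshift := Finsupp.weight_tsub_single_add_single 1 hk j
  have ha := hv (mem_support_iff.mp ha)
  simp only [Pi.one_apply] at hshift
  omega

end IsExponentShift

lemma Submodule.monomial_mem_of_support_subset_singleton {R σ : Type*} [Field R]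
    {V : Submodule R (MvPolynomial σ R)} {u : MvPolynomial σ R} (hu : u ∈ V) (hu0 : u ≠ 0)
    {a : σ →₀ ℕ} (hsupp : u.support ⊆ {a}) : monomial a 1 ∈ V := by
  have hua : u = monomial a (coeff a u) := by
    conv_lhs => rw [u.as_sum, Finset.sum_subset hsupp (fun b _ hb => by
      rw [notMem_support_iff.mp hb, monomial_zero]), Finset.sum_singleton]
  have hc : coeff a u ≠ 0 := fun hc => hu0 (by rw [hua, hc, monomial_zero])
  rw [hua, ← mul_one (coeff a u), ← smul_eq_mul, ← smul_monomial] at hu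
  exact (V.smul_mem_iff hc).mp hu

lemma MvPolynomial.homogeneousSubmodule_le_of_monomial_mem {R σ : Type*} [CommSemiring R]
    {V : Submodule R (MvPolynomial σ R)} {s : ℕ}
    (h : ∀ a : σ →₀ ℕ, a.degree = s → monomial a 1 ∈ V) :
    homogeneousSubmodule σ R s ≤ V := by
  rw [homogeneousSubmodule_eq_finsupp_supported, AddMonoidAlgebra.supported_eq_span_single,
    Submodule.span_le]
  rintro _ ⟨a, ha, rfl⟩
  exact h a ha

section Chain

open Finsupp (degree weight_val_tsub_single_succ_add_single_castSucc
  exists_pos_succ_of_weight_val_ne_zero)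

variable {R : Type*} [Field R] {r s : ℕ} {V : Submodule R (MvPolynomial (Fin (r + 2)) R)}

lemma exists_ne_zero_weight_val_eq_zero
    {E : Fin (r + 1) → Module.End R (MvPolynomial (Fin (r + 2)) R)}
    {cE : Fin (r + 1) → (Fin (r + 2) →₀ ℕ) → R}
    (hE : ∀ i, IsExponentShift (E i) i.succ i.castSucc (cE i)) (hV : ∀ i, ∀ v ∈ V, E i v ∈ V)
    {v : MvPolynomial (Fin (r + 2)) R} (hv : v ∈ V) (hv0 : v ≠ 0) :
    ∃ u ∈ V, u ≠ 0 ∧ ∀ a ∈ u.support, weight Fin.val a = 0 := by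
  obtain ⟨N, hN⟩ : ∃ N, ∀ a ∈ v.support, weight Fin.val a ≤ N :=
    ⟨v.support.sup (weight Fin.val), fun a ha => Finset.le_sup (f := fun a => weight Fin.val a) ha⟩
  induction N generalizing v with
  | zero => exact ⟨v, hv, hv0, fun a ha => Nat.le_zero.mp (hN a ha)⟩
  | succ N ih =>
    by_cases hz : ∀ a ∈ v.support, weight Fin.val a = 0
    · exact ⟨v, hv, hv0, hz⟩
    push Not at hz
    obtain ⟨a, ha, hwa⟩ := hz
    obtain ⟨i, hi⟩ := exists_pos_succ_of_weight_val_ne_zero hwa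
    refine ih (hV i v hv) ((hE i).ne_zero ha hi) fun b hb => ?_
    obtain ⟨a', ha', hi', rfl⟩ := (hE i).exists_of_mem_support hb
    have := weight_val_tsub_single_succ_add_single_castSucc hi'
    have := hN a' ha'
    omega

lemma monomial_single_zero_mem (hVs : V ≤ homogeneousSubmodule (Fin (r + 2)) R s)
    {u : MvPolynomial (Fin (r + 2)) R} (hu : u ∈ V) (hu0 : u ≠ 0)
    (hw : ∀ a ∈ u.support, weight Fin.val a = 0) : monomial (single 0 s) 1 ∈ V := by
  refine Submodule.monomial_mem_of_support_subset_singleton hu hu0 fun a ha => ?_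
  have hdeg : a.degree = s := by
    rw [Finsupp.degree_eq_weight_one]
    exact hVs hu (mem_support_iff.mp ha)
  rw [Finset.mem_singleton, Finsupp.eq_single_zero_of_weight_val_eq_zero (hw a ha), hdeg]

lemma monomial_mem_of_single_zero_mem
    {F : Fin (r + 1) → Module.End R (MvPolynomial (Fin (r + 2)) R)}
    {cF : Fin (r + 1) → (Fin (r + 2) →₀ ℕ) → R}
    (hF : ∀ i, IsExponentShift (F i) i.castSucc i.succ (cF i)) (hV : ∀ i, ∀ v ∈ V, F i v ∈ V)
    (h0 : monomial (single 0 s) 1 ∈ V) {a : Fin (r + 2) →₀ ℕ} (ha : a.degree = s) :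
    monomial a 1 ∈ V := by
  obtain ⟨N, hN⟩ : ∃ N, weight Fin.val a = N := ⟨_, rfl⟩
  induction N generalizing a with
  | zero => rwa [Finsupp.eq_single_zero_of_weight_val_eq_zero hN, ha]
  | succ N ih =>
    obtain ⟨i, hi⟩ := exists_pos_succ_of_weight_val_ne_zero (hN.trans_ne N.succ_ne_zero)
    have hw := weight_val_tsub_single_succ_add_single_castSucc hi
    set b := a - single i.succ 1
    have hab : b + single i.succ 1 = a := tsub_add_cancel_of_le (single_le_iff.mpr hi)
    have hb : monomial (b + single i.castSucc 1) 1 ∈ V :=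
      ih ((Finsupp.degree_tsub_single_add_single hi _).trans ha) (by omega)
    have hc : cF i (b + single i.castSucc 1) ≠ 0 := by simp [(hF i).coeff_eq_zero_iff]
    have hFb := hV i _ hb
    rw [(hF i).apply_monomial_add_single, hab] at hFb
    exact (V.smul_mem_iff hc).mp hFb

end Chain

/-- for s ≥ 0, the homogeneous component P_s of ℚ(q)[X₀,…,X_{r+1}]
is invariant and irreducible under the operators e_i, f_i (0 ≤ i ≤ r) given by
e_i X^a = [ξ_{i+1} a_{i+1}] X^{a+e_i−e_{i+1}} and f_i X^a = [ξ'_i a_i] X^{a−e_i+e_{i+1}}. -/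
theorem stmt16 (r s : ℕ) (ξ ξ' : Fin (r + 2) → ℕ) (hξ : ∀ i, 0 < ξ i)
    (hξ' : ∀ i, 0 < ξ' i)
    (e f : Fin (r + 1) → Module.End K (MvPolynomial (Fin (r + 2)) K))
    (he : ∀ (i : Fin (r + 1)) (a : Fin (r + 2) →₀ ℕ),
      e i (MvPolynomial.monomial a (1 : K))
        = qint ((ξ i.succ * a i.succ : ℕ) : ℤ) •
            MvPolynomial.monomial
              (a + Finsupp.single i.castSucc 1 - Finsupp.single i.succ 1) (1 : K))
    (hf : ∀ (i : Fin (r + 1)) (a : Fin (r + 2) →₀ ℕ),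
      f i (MvPolynomial.monomial a (1 : K))
        = qint ((ξ' i.castSucc * a i.castSucc : ℕ) : ℤ) •
            MvPolynomial.monomial
              (a - Finsupp.single i.castSucc 1 + Finsupp.single i.succ 1) (1 : K)) :
    (∀ i : Fin (r + 1), ∀ v ∈ MvPolynomial.homogeneousSubmodule (Fin (r + 2)) K s,
        e i v ∈ MvPolynomial.homogeneousSubmodule (Fin (r + 2)) K s ∧
        f i v ∈ MvPolynomial.homogeneousSubmodule (Fin (r + 2)) K s) ∧
    (∀ V : Submodule K (MvPolynomial (Fin (r + 2)) K),
      V ≤ MvPolynomial.homogeneousSubmodule (Fin (r + 2)) K s → V ≠ ⊥ →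
      (∀ i : Fin (r + 1), ∀ v ∈ V, e i v ∈ V ∧ f i v ∈ V) →
      V = MvPolynomial.homogeneousSubmodule (Fin (r + 2)) K s) := by
  have hE : ∀ i, IsExponentShift (e i) i.succ i.castSucc
      (fun a => qint ((ξ i.succ * a i.succ : ℕ) : ℤ)) := fun i =>
    ⟨fun a => by rw [he, Finsupp.add_single_tsub_single_of_ne Fin.castSucc_lt_succ.ne],
      fun a => by simp only [qint_natCast_eq_zero_iff, mul_eq_zero, (hξ _).ne', false_or]⟩
  have hF : ∀ i, IsExponentShift (f i) i.castSucc i.succ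
      (fun a => qint ((ξ' i.castSucc * a i.castSucc : ℕ) : ℤ)) := fun i =>
    ⟨hf i, fun a => by simp only [qint_natCast_eq_zero_iff, mul_eq_zero, (hξ' _).ne', false_or]⟩
  refine ⟨fun i v hv => ⟨(hE i).mem_homogeneousSubmodule hv, (hF i).mem_homogeneousSubmodule hv⟩,
    fun V hVs hV0 hV => le_antisymm hVs ?_⟩
  obtain ⟨v, hv, hv0⟩ := V.ne_bot_iff.mp hV0
  obtain ⟨u, hu, hu0, hw⟩ :=
    exists_ne_zero_weight_val_eq_zero hE (fun i v hv => (hV i v hv).1) hv hv0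
  have h0 := monomial_single_zero_mem hVs hu hu0 hw
  exact homogeneousSubmodule_le_of_monomial_mem fun a ha =>
    monomial_mem_of_single_zero_mem hF (fun i v hv => (hV i v hv).2) h0 ha
end
end
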